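/- Let G be a k × n matrix over ZMod 2 of rank k, let p : Fin n → ℝ with 0 ≤ p i ≤ 1 model n independent bits, and let x_max be the most probable input vector (x_max i = 1 if p i ≥ 1/2, else 0). Then the most probable output of the linear corrector y = G.mulVec x is the image of the most probable input: for every y ∈ (Fin k → ZMod 2), P_p[{x : G.mulVec x = y}] ≤ P_p[{x : G.mulVec x = G.mulVec x_max}]. -/
import Mathlib


open Classical in
/-- Probability of a set of bit-vectors under independent, not necessarily identically
distributed bits with coordinate 1-probabilities `p`. -/
noncomputable def probOf {n : ℕ} (p : Fin n → ℝ) (S : Set (Fin n → ZMod 2)) : ℝ :=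
  ∑ x : Fin n → ZMod 2,
    if x ∈ S then (∏ i, if x i = 1 then p i else 1 - p i) else 0

namespace MPOaux

open Finset

/-- The real-valued sign character on `ZMod 2`. -/
noncomputable def eps : ZMod 2 → ℝ := fun b => if b = 1 then -1 else 1

lemma eps_zero : eps 0 = 1 := by simp [eps]

lemma eps_one : eps 1 = -1 := by simp [eps]

lemma zmod2_cases (a : ZMod 2) : a = 0 ∨ a = 1 := by revert a; decide

lemma eps_add (a b : ZMod 2) : eps (a + b) = eps a * eps b := by
  rcases zmod2_cases a with ha | ha <;> rcases zmod2_cases b with hb | hb <;>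
    subst ha <;> subst hb <;>
    simp [eps, (by decide : (1 + 1 : ZMod 2) = 0), (by decide : (1 : ZMod 2) ≠ 0)]

lemma abs_eps (a : ZMod 2) : |eps a| = 1 := by
  rcases zmod2_cases a with ha | ha <;> subst ha <;> simp [eps_zero, eps_one]

lemma eps_sum {ι : Type*} (A : Finset ι) (g : ι → ZMod 2) :
    eps (∑ i ∈ A, g i) = ∏ i ∈ A, eps (g i) := by
  induction A using Finset.cons_induction with
  | empty => simp [eps_zero]
  | cons a s ha ih => rw [Finset.sum_cons, Finset.prod_cons, eps_add, ih]

/-- The character associated to `s`. -/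
noncomputable def chi {m : ℕ} (s v : Fin m → ZMod 2) : ℝ := eps (∑ i, s i * v i)

lemma chi_add {m : ℕ} (s a b : Fin m → ZMod 2) :
    chi s (a + b) = chi s a * chi s b := by
  unfold chi
  rw [← eps_add, ← Finset.sum_add_distrib]
  congr 1
  refine Finset.sum_congr rfl fun i _ => ?_
  simp [mul_add]

lemma abs_chi {m : ℕ} (s v : Fin m → ZMod 2) : |chi s v| = 1 := abs_eps _

lemma sum_zmod2 (h : ZMod 2 → ℝ) : ∑ b : ZMod 2, h b = h 0 + h 1 := by
  have : (Finset.univ : Finset (ZMod 2)) = {0, 1} := by decide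
  rw [this, Finset.sum_insert (by decide), Finset.sum_singleton]

lemma sum_chi {m : ℕ} (v : Fin m → ZMod 2) :
    ∑ s : Fin m → ZMod 2, chi s v = if v = 0 then (2 : ℝ) ^ m else 0 := by
  classical
  have h1 : ∀ s : Fin m → ZMod 2, chi s v = ∏ i, eps (s i * v i) := fun s =>
    eps_sum Finset.univ _
  simp only [h1]
  rw [← Fintype.prod_sum (f := fun i b => eps (b * v i))]
  by_cases hv : v = 0
  · subst hv
    simp [sum_zmod2, eps_zero]
  · rw [if_neg hv]
    obtain ⟨j, hj⟩ : ∃ j, v j ≠ 0 := by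
      by_contra h
      push_neg at h
      exact hv (funext fun i => h i)
    have hj1 : v j = 1 := (zmod2_cases (v j)).resolve_left hj
    refine Finset.prod_eq_zero (Finset.mem_univ j) ?_
    rw [sum_zmod2 (fun b => eps (b * v j))]
    simp [hj1, eps_zero, eps_one]

/-- Factorization of the "Fourier coefficient" sums. -/
lemma sum_chi_weight {n : ℕ} (p : Fin n → ℝ) (t : Fin n → ZMod 2) :
    ∑ x : Fin n → ZMod 2, chi t x * ∏ i, (if x i = 1 then p i else 1 - p i)
      = ∏ i, ((1 - p i) + eps (t i) * p i) := by
  classical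
  have h1 : ∀ x : Fin n → ZMod 2,
      chi t x * ∏ i, (if x i = 1 then p i else 1 - p i)
        = ∏ i, (eps (t i * x i) * (if x i = 1 then p i else 1 - p i)) := by
    intro x
    rw [Finset.prod_mul_distrib]
    congr 1
    exact eps_sum Finset.univ _
  simp only [h1]
  rw [← Fintype.prod_sum (f := fun i b => eps (t i * b) * (if b = 1 then p i else 1 - p i))]
  refine Finset.prod_congr rfl fun i _ => ?_
  rw [sum_zmod2 (fun b => eps (t i * b) * (if b = 1 then p i else 1 - p i))]
  simp [(by decide : (0 : ZMod 2) ≠ 1), eps_zero]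

end MPOaux

/-- The most probable output of a linear corrector is the image of the most
probable input vector. -/
theorem most_probable_output {n k : ℕ}
    (G : Matrix (Fin k) (Fin n) (ZMod 2)) (hG : G.rank = k)
    (p : Fin n → ℝ) (hp : ∀ i, 0 ≤ p i ∧ p i ≤ 1)
    (xmax : Fin n → ZMod 2)
    (hxmax : ∀ i, xmax i = if (1 : ℝ) / 2 ≤ p i then 1 else 0)
    (y : Fin k → ZMod 2) :
    probOf p {x | G.mulVec x = y} ≤ probOf p {x | G.mulVec x = G.mulVec xmax} := by
  classical
  open MPOaux in
  -- weight function
  set w : (Fin n → ZMod 2) → ℝ := fun x => ∏ i, if x i = 1 then p i else 1 - p i with hw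
  -- the transposed vector
  set t : (Fin k → ZMod 2) → (Fin n → ZMod 2) := fun s => Matrix.vecMul s G with ht
  have hchiG : ∀ (s : Fin k → ZMod 2) (x : Fin n → ZMod 2),
      chi s (G.mulVec x) = chi (t s) x := by
    intro s x
    unfold chi
    congr 1
    exact Matrix.dotProduct_mulVec s G x
  -- Fourier expansion of the fiber probabilities
  have hprob : ∀ z : Fin k → ZMod 2,
      (2 : ℝ) ^ k * probOf p {x | G.mulVec x = z}
        = ∑ s : Fin k → ZMod 2, chi s z * ∏ i, ((1 - p i) + eps (t s i) * p i) := by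
    intro z
    have key : ∀ x : Fin n → ZMod 2,
        (if G.mulVec x = z then (2 : ℝ) ^ k else 0)
          = ∑ s : Fin k → ZMod 2, chi s (G.mulVec x) * chi s z := by
      intro x
      have hiff : (G.mulVec x + z = 0) ↔ G.mulVec x = z := by
        constructor
        · intro h
          funext i
          have := congrFun h i
          revert this
          have : ∀ a b : ZMod 2, a + b = 0 → a = b := by decide
          exact fun h' => this _ _ h'
        · intro h
          funext i
          rw [h]
          have : ∀ b : ZMod 2, b + b = 0 := by decide
          exact this (z i)
      have := sum_chi (G.mulVec x + z)
      simp only [chi_add] at this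
      rw [this]
      by_cases hc : G.mulVec x = z
      · rw [if_pos hc, if_pos (hiff.mpr hc)]
      · rw [if_neg hc, if_neg (fun h => hc (hiff.mp h))]
    unfold probOf
    simp only [Set.mem_setOf_eq]
    rw [Finset.mul_sum]
    have hwx : ∀ x : Fin n → ZMod 2,
        (∏ i, if x i = 1 then p i else 1 - p i) = w x := fun _ => rfl
    simp only [hwx]
    have step1 : ∀ x : Fin n → ZMod 2,
        (2 : ℝ) ^ k * (if G.mulVec x = z then w x else 0)
          = (∑ s : Fin k → ZMod 2, chi s (G.mulVec x) * chi s z) * w x := by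
      intro x
      rw [← key]
      split <;> ring
    calc ∑ x : Fin n → ZMod 2, (2:ℝ)^k * (if G.mulVec x = z then w x else 0)
        = ∑ x : Fin n → ZMod 2, ∑ s : Fin k → ZMod 2,
            chi s z * (chi s (G.mulVec x) * w x) := by
          refine Finset.sum_congr rfl fun x _ => ?_
          rw [step1, Finset.sum_mul]
          refine Finset.sum_congr rfl fun s _ => ?_
          ring
      _ = ∑ s : Fin k → ZMod 2, chi s z *
            ∑ x : Fin n → ZMod 2, chi (t s) x * w x := by
          rw [Finset.sum_comm]
          refine Finset.sum_congr rfl fun s _ => ?_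
          rw [Finset.mul_sum]
          refine Finset.sum_congr rfl fun x _ => ?_
          rw [hchiG]
      _ = ∑ s : Fin k → ZMod 2, chi s z * ∏ i, ((1 - p i) + eps (t s i) * p i) := by
          refine Finset.sum_congr rfl fun s _ => ?_
          rw [sum_chi_weight p (t s)]
  -- per-character inequality
  have hineq : ∀ s : Fin k → ZMod 2,
      chi s y * ∏ i, ((1 - p i) + eps (t s i) * p i)
        ≤ chi s (G.mulVec xmax) * ∏ i, ((1 - p i) + eps (t s i) * p i) := by
    intro s
    set F : ℝ := ∏ i, ((1 - p i) + eps (t s i) * p i) with hF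
    have hRHS : chi s (G.mulVec xmax) * F = |F| := by
      rw [hchiG]
      have h1 : chi (t s) xmax = ∏ i, eps (t s i * xmax i) := eps_sum Finset.univ _
      rw [h1, hF, ← Finset.prod_mul_distrib, Finset.abs_prod]
      refine Finset.prod_congr rfl fun i _ => ?_
      obtain ⟨hp0, hp1⟩ := hp i
      rcases zmod2_cases (t s i) with h | h <;> rw [h]
      · simp [eps_zero]
      · rw [eps_one]
        by_cases hhalf : (1 : ℝ) / 2 ≤ p i
        · have hx : xmax i = 1 := by rw [hxmax i, if_pos hhalf]
          rw [hx]
          simp [eps_one]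
          rw [abs_of_nonpos (by linarith)]
          ring
        · have hx : xmax i = 0 := by rw [hxmax i, if_neg hhalf]
          rw [hx]
          simp [eps_zero]
          rw [abs_of_nonneg (by push_neg at hhalf; linarith)]
    rw [hRHS]
    calc chi s y * F ≤ |chi s y * F| := le_abs_self _
      _ = |chi s y| * |F| := abs_mul _ _
      _ = |F| := by rw [abs_chi, one_mul]
  -- conclude
  have hsum : (2 : ℝ) ^ k * probOf p {x | G.mulVec x = y}
      ≤ (2 : ℝ) ^ k * probOf p {x | G.mulVec x = G.mulVec xmax} := by
    rw [hprob y, hprob (G.mulVec xmax)]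
    exact Finset.sum_le_sum fun s _ => hineq s
  have h2k : (0 : ℝ) < 2 ^ k := by positivity
  exact le_of_mul_le_mul_left hsum h2k
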